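/- arXiv:2305.08324 — 4 statements merged into one kernel-verified Lean document; each statement's English description precedes it below -/
import Mathlib

section
/- Let k be a field of characteristic not 2 and let f₁, f₂ ∈ k[X,Y] be independent quadratics. Then the pencil k·f₁ + k·f₂ contains a hyperbola, i.e., there exist α, β ∈ k, not both zero, such that the degree-2 homogeneous part of αf₁ + βf₂ factors over k as a product of two non-proportional linear forms. -/
open MvPolynomial

/-- Two quadratics are independent if every nontrivial linear combination has degree 2. -/
def Indep {k : Type*} [Field k] (f₁ f₂ : MvPolynomial (Fin 2) k) : Prop :=
  ∀ α β : k, ¬(α = 0 ∧ β = 0) → (C α * f₁ + C β * f₂).totalDegree = 2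

/-- A quadratic is a hyperbola when its degree-2 homogeneous part factors over `k`
into two non-proportional linear forms. -/
def IsHyperbola {k : Type*} [Field k] (g : MvPolynomial (Fin 2) k) : Prop :=
  ∃ l₁ l₂ : MvPolynomial (Fin 2) k, l₁.IsHomogeneous 1 ∧ l₂.IsHomogeneous 1 ∧
    homogeneousComponent 2 g = l₁ * l₂ ∧
    ¬ ∃ c : k, l₂ = C c * l₁ ∨ l₁ = C c * l₂

/-!
Write the quadratic part of a conic as `a X² + b XY + c Y²`. As `char k ≠ 2`, it splits into two
non-proportional linear forms as soon as its discriminant `b² - 4ac` is a nonzero square.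
The member `p = a₂ f₁ - a₁ f₂` of the pencil has no `X²` term. If it has an `XY` term, its
discriminant is `b²`; otherwise independence forces `p` to have a `Y²` term, and then the
discriminant of `f₁ + s p` is affine in `s` with nonzero slope, so it takes the value `1`.
(If `a₁ = a₂ = 0`, every member has no `X²` term, and independence yields one with an `XY` term.)
-/

open Finsupp (single)

section CommSemiring

variable {R : Type*} [CommSemiring R]

theorem homogeneousComponent_two_eq (g : MvPolynomial (Fin 2) R) :
    homogeneousComponent 2 g =
      C (coeff (single 0 2) g) * X 0 ^ 2 +
      C (coeff (single 0 1 + single 1 1) g) * (X 0 * X 1) +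
      C (coeff (single 1 2) g) * X 1 ^ 2 := by
  rw [C_mul_X_pow_eq_monomial, C_mul_X_pow_eq_monomial, X, X, monomial_mul, C_mul_monomial,
    mul_one, mul_one]
  ext d
  obtain ⟨i, j, rfl⟩ : ∃ i j, d = single 0 i + single 1 j :=
    ⟨d 0, d 1, by ext i; fin_cases i <;> simp⟩
  simp only [coeff_homogeneousComponent, coeff_add, coeff_monomial, map_add,
    Finsupp.degree_single]
  by_cases h : i + j = 2
  · obtain ⟨rfl, rfl⟩ | ⟨rfl, rfl⟩ | ⟨rfl, rfl⟩ :
        (i = 2 ∧ j = 0) ∨ (i = 1 ∧ j = 1) ∨ (i = 0 ∧ j = 2) := by omega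
    all_goals simp [Finsupp.ext_iff, Fin.forall_fin_two]
  · rw [if_neg h]
    simp only [Finsupp.ext_iff, Fin.forall_fin_two, Finsupp.add_apply, Finsupp.single_apply]
    split_ifs <;> first | omega | simp

theorem quadratic_coeff_ne_zero_of_totalDegree_eq_two {g : MvPolynomial (Fin 2) R}
    (hg : g.totalDegree = 2) :
    coeff (single 0 2) g ≠ 0 ∨ coeff (single 0 1 + single 1 1) g ≠ 0 ∨
      coeff (single 1 2) g ≠ 0 := by
  have hg₀ : g.support.Nonempty := by
    rw [Finset.nonempty_iff_ne_empty, Ne, support_eq_empty]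
    rintro rfl
    simp at hg
  obtain ⟨d, hd, hd₂⟩ := Finset.exists_mem_eq_sup _ hg₀ fun d => d.degree
  have hcomp : homogeneousComponent 2 g ≠ 0 := by
    refine ne_of_apply_ne (coeff d) ?_
    rw [coeff_homogeneousComponent, if_pos (by rw [← hd₂]; exact hg), coeff_zero]
    exact mem_support_iff.mp hd
  contrapose! hcomp
  rw [homogeneousComponent_two_eq, hcomp.1, hcomp.2.1, hcomp.2.2]
  simp

theorem coeff_C_mul_add_C_mul (m : Fin 2 →₀ ℕ) (α β : R) (f₁ f₂ : MvPolynomial (Fin 2) R) :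
    coeff m (C α * f₁ + C β * f₂) = α * coeff m f₁ + β * coeff m f₂ := by
  rw [coeff_add, coeff_C_mul, coeff_C_mul]

end CommSemiring

noncomputable section

variable {k : Type*} [Field k]

def linearForm (p q : k) : MvPolynomial (Fin 2) k := C p * X 0 + C q * X 1

theorem isHomogeneous_linearForm (p q : k) : (linearForm p q).IsHomogeneous 1 :=
  (isHomogeneous_C_mul_X p 0).add (isHomogeneous_C_mul_X q 1)

theorem C_mul_linearForm (c p q : k) : C c * linearForm p q = linearForm (c * p) (c * q) := by
  simp only [linearForm, map_mul]
  ring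

theorem linearForm_inj {p q p' q' : k} :
    linearForm p q = linearForm p' q' ↔ p = p' ∧ q = q' := by
  refine ⟨fun h => ⟨?_, ?_⟩, fun ⟨hp, hq⟩ => hp ▸ hq ▸ rfl⟩
  · simpa [linearForm, coeff_X, Finsupp.single_eq_single_iff] using
      congrArg (coeff (single 0 1)) h
  · simpa [linearForm, coeff_X, Finsupp.single_eq_single_iff] using
      congrArg (coeff (single 1 1)) h

theorem isHyperbola_of_coeff_eq_mul {g : MvPolynomial (Fin 2) k} {p q r s : k}
    (ha : coeff (single 0 2) g = p * r) (hb : coeff (single 0 1 + single 1 1) g = p * s + q * r)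
    (hc : coeff (single 1 2) g = q * s) (hdet : p * s - q * r ≠ 0) :
    IsHyperbola g := by
  refine ⟨_, _, isHomogeneous_linearForm p q, isHomogeneous_linearForm r s, ?_, ?_⟩
  · rw [homogeneousComponent_two_eq, ha, hb, hc, linearForm, linearForm]
    simp only [map_add, map_mul]
    ring
  rintro ⟨c, h | h⟩
  all_goals
    obtain ⟨rfl, rfl⟩ := linearForm_inj.mp (h.trans (C_mul_linearForm _ _ _))
    exact hdet (by ring)

theorem isHyperbola_of_coeff_eq_zero {g : MvPolynomial (Fin 2) k}
    (ha : coeff (single 0 2) g = 0) (hb : coeff (single 0 1 + single 1 1) g ≠ 0) :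
    IsHyperbola g :=
  isHyperbola_of_coeff_eq_mul (p := 0) (q := 1) (r := coeff (single 0 1 + single 1 1) g)
    (s := coeff (single 1 2) g) (by simp [ha]) (by ring) (by ring) (by simpa using hb)

def discr (g : MvPolynomial (Fin 2) k) : k :=
  coeff (single 0 1 + single 1 1) g ^ 2 - 4 * coeff (single 0 2) g * coeff (single 1 2) g

theorem isHyperbola_of_discr_eq_sq (hch : (2 : k) ≠ 0) {g : MvPolynomial (Fin 2) k} {d : k}
    (hd : d ≠ 0) (hdiscr : discr g = d ^ 2) : IsHyperbola g := by
  rw [discr] at hdiscr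
  set a := coeff (single 0 2) g
  set b := coeff (single 0 1 + single 1 1) g
  set c := coeff (single 1 2) g
  by_cases ha : a = 0
  · refine isHyperbola_of_coeff_eq_zero ha fun hb => hd (pow_eq_zero_iff two_ne_zero |>.mp ?_)
    rw [← hdiscr, ha, show b = 0 from hb]
    ring
  -- `a X² + b XY + c Y² = (a X + (b + d)/2 Y) (X + (b - d)/(2a) Y)`
  refine isHyperbola_of_coeff_eq_mul (p := a) (q := (b + d) / 2) (r := 1)
    (s := (b - d) / (2 * a)) (mul_one a).symm ?_ ?_ ?_
  · field_simp
    ring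
  · change c = _
    field_simp
    linear_combination -hdiscr
  · rw [show a * ((b - d) / (2 * a)) - (b + d) / 2 * 1 = -d by field_simp; ring]
    exact neg_ne_zero.mpr hd

namespace Indep

variable {f₁ f₂ : MvPolynomial (Fin 2) k}

theorem symm (hf : Indep f₁ f₂) : Indep f₂ f₁ := fun α β h =>
  add_comm (C β * f₁) (C α * f₂) ▸ hf β α fun h' => h ⟨h'.2, h'.1⟩

theorem quadratic_coeff_ne_zero (hf : Indep f₁ f₂) {α β : k} (h : ¬(α = 0 ∧ β = 0)) :
    α * coeff (single 0 2) f₁ + β * coeff (single 0 2) f₂ ≠ 0 ∨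
      α * coeff (single 0 1 + single 1 1) f₁ + β * coeff (single 0 1 + single 1 1) f₂ ≠ 0 ∨
      α * coeff (single 1 2) f₁ + β * coeff (single 1 2) f₂ ≠ 0 := by
  simpa only [coeff_C_mul_add_C_mul] using
    quadratic_coeff_ne_zero_of_totalDegree_eq_two (hf α β h)

theorem exists_isHyperbola_of_coeff_eq_zero (hf : Indep f₁ f₂)
    (ha₁ : coeff (single 0 2) f₁ = 0) (ha₂ : coeff (single 0 2) f₂ = 0) :
    ∃ α β : k, ¬(α = 0 ∧ β = 0) ∧ IsHyperbola (C α * f₁ + C β * f₂) := by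
  by_cases hb₁ : coeff (single 0 1 + single 1 1) f₁ = 0
  · by_cases hb₂ : coeff (single 0 1 + single 1 1) f₂ = 0
    · exfalso
      have hc₁ : coeff (single 1 2) f₁ ≠ 0 := by
        simpa [ha₁, hb₁] using hf.quadratic_coeff_ne_zero (α := 1) (β := 0) (by simp)
      simpa [ha₁, ha₂, hb₁, hb₂, mul_comm] using
        hf.quadratic_coeff_ne_zero (α := coeff (single 1 2) f₂) (β := -coeff (single 1 2) f₁)
          (by simp [hc₁])
    · exact ⟨0, 1, by simp, isHyperbola_of_coeff_eq_zero (by simp [ha₂])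
        (by simpa [coeff_C_mul_add_C_mul])⟩
  · exact ⟨1, 0, by simp, isHyperbola_of_coeff_eq_zero (by simp [ha₁])
      (by simpa [coeff_C_mul_add_C_mul])⟩

theorem exists_isHyperbola_of_coeff_ne_zero (hch : (2 : k) ≠ 0) (hf : Indep f₁ f₂)
    (ha₁ : coeff (single 0 2) f₁ ≠ 0) :
    ∃ α β : k, ¬(α = 0 ∧ β = 0) ∧ IsHyperbola (C α * f₁ + C β * f₂) := by
  have hdiscr : ∀ α β : k, discr (C α * f₁ + C β * f₂) =
      (α * coeff (single 0 1 + single 1 1) f₁ + β * coeff (single 0 1 + single 1 1) f₂) ^ 2 -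
        4 * (α * coeff (single 0 2) f₁ + β * coeff (single 0 2) f₂) *
          (α * coeff (single 1 2) f₁ + β * coeff (single 1 2) f₂) := fun α β => by
    simp only [discr, coeff_C_mul_add_C_mul]
  set a₁ := coeff (single 0 2) f₁
  set b₁ := coeff (single 0 1 + single 1 1) f₁
  set c₁ := coeff (single 1 2) f₁
  set a₂ := coeff (single 0 2) f₂
  set b₂ := coeff (single 0 1 + single 1 1) f₂
  set c₂ := coeff (single 1 2) f₂
  have hp : ¬(a₂ = 0 ∧ -a₁ = 0) := fun h => ha₁ (neg_eq_zero.mp h.2)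
  -- `a₂ f₁ - a₁ f₂` has no `X²` term, and `a₂ b₁ - a₁ b₂` is its `XY` coefficient
  by_cases hb : a₂ * b₁ - a₁ * b₂ = 0
  · have hc : a₂ * c₁ - a₁ * c₂ ≠ 0 := by
      rcases hf.quadratic_coeff_ne_zero hp with h | h | h
      · exact absurd (by ring) h
      · exact absurd (by linear_combination hb) h
      · exact fun h' => h (by linear_combination h')
    set s := (b₁ ^ 2 - 4 * a₁ * c₁ - 1) / (4 * a₁ * (a₂ * c₁ - a₁ * c₂))
    have hs : s * (4 * a₁ * (a₂ * c₁ - a₁ * c₂)) = b₁ ^ 2 - 4 * a₁ * c₁ - 1 := by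
      have h4 : (4 : k) ≠ 0 := by
        rw [show (4 : k) = 2 * 2 by norm_num]
        exact mul_ne_zero hch hch
      exact div_mul_cancel₀ _ (mul_ne_zero (mul_ne_zero h4 ha₁) hc)
    refine ⟨1 + s * a₂, -(s * a₁), ?_, isHyperbola_of_discr_eq_sq hch one_ne_zero ?_⟩
    · rintro ⟨h₁, h₂⟩
      have : s = 0 := by simpa [ha₁] using h₂
      simp [this] at h₁
    · rw [hdiscr]
      linear_combination (s * (2 * b₁ + s * (a₂ * b₁ - a₁ * b₂))) * hb - hs
  · refine ⟨a₂, -a₁, hp, isHyperbola_of_coeff_eq_zero ?_ ?_⟩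
    · rw [coeff_C_mul_add_C_mul]
      ring
    · rw [coeff_C_mul_add_C_mul]
      exact fun h => hb (by linear_combination h)

end Indep

end

/-- Every pencil of affine conics contains a hyperbola. -/
theorem stmt6 {k : Type*} [Field k] (hch : (2 : k) ≠ 0)
    (f₁ f₂ : MvPolynomial (Fin 2) k) (hf : Indep f₁ f₂) :
    ∃ α β : k, ¬(α = 0 ∧ β = 0) ∧ IsHyperbola (C α * f₁ + C β * f₂) := by
  by_cases ha₁ : coeff (single 0 2) f₁ = 0
  · by_cases ha₂ : coeff (single 0 2) f₂ = 0
    · exact hf.exists_isHyperbola_of_coeff_eq_zero ha₁ ha₂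
    · obtain ⟨α, β, hαβ, hyp⟩ := hf.symm.exists_isHyperbola_of_coeff_ne_zero hch ha₂
      exact ⟨β, α, fun h => hαβ ⟨h.2, h.1⟩, add_comm (C β * f₁) (C α * f₂) ▸ hyp⟩
  · exact hf.exists_isHyperbola_of_coeff_ne_zero hch ha₁
end

section
/- Let k be an algebraically closed field of characteristic not 2, and let f₁ = XY and f₂ = (aX + bY)(cX + dY) with a,b,c,d ∈ k satisfying ad − bc ≠ 0, the pair (a,b) ≠ (0,0), the pair (c,d) ≠ (0,0), the pair (a,d) ≠ (0,0), and the pair (b,c) ≠ (0,0) (so that f₁ and f₂ are independent quadratics defining distinct degenerate hyperbolas with center the origin). Then there exist α, β ∈ k, not both zero, and e, f ∈ k, not both zero, such that αXY + β(aX + bY)(cX + dY) = (eX + fY)². That is, the pencil generated by two such degenerate hyperbolas with a common center contains a double line. -/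
/-!
Choose square roots `e² = ac` and `f² = bd`. Then `(eX + fY)²` and `(aX + bY)(cX + dY)` agree in
their `X²` and `Y²` coefficients, so they differ by a multiple of `XY`. The square is not zero,
since `e = f = 0` would force one of `a, b, c, d` to vanish in each of the pairs `(a, c)` and
`(b, d)`, i.e. one of the excluded pairs to be `(0, 0)`.
-/

open MvPolynomial

lemma pencil_eq_sq_of_sq_eq_mul {R : Type*} [CommRing R] {a b c d e f : R}
    (he : e ^ 2 = a * c) (hf : f ^ 2 = b * d) (x y : R) :
    (2 * e * f - (a * d + b * c)) * (x * y) + (a * x + b * y) * (c * x + d * y) =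
      (e * x + f * y) ^ 2 := by
  linear_combination (-x ^ 2) * he - y ^ 2 * hf

lemma not_and_eq_zero_of_sq_eq_mul {M : Type*} [MonoidWithZero M] [NoZeroDivisors M]
    {a b c d e f : M} (he : e ^ 2 = a * c) (hf : f ^ 2 = b * d)
    (had : ¬(a = 0 ∧ d = 0)) (hbc : ¬(b = 0 ∧ c = 0))
    (hab : ¬(a = 0 ∧ b = 0)) (hcd : ¬(c = 0 ∧ d = 0)) :
    ¬(e = 0 ∧ f = 0) := by
  rintro ⟨rfl, rfl⟩
  rcases mul_eq_zero.mp (he.symm.trans (zero_pow two_ne_zero)) with ha | hc <;>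
    rcases mul_eq_zero.mp (hf.symm.trans (zero_pow two_ne_zero)) with hb | hd
  exacts [hab ⟨ha, hb⟩, had ⟨ha, hd⟩, hbc ⟨hb, hc⟩, hcd ⟨hc, hd⟩]

theorem stmt9_general {k : Type*} [Field k] [IsAlgClosed k]
    (a b c d : k)
    (h2 : ¬(a = 0 ∧ d = 0)) (h3 : ¬(b = 0 ∧ c = 0))
    (h4 : ¬(a = 0 ∧ b = 0)) (h5 : ¬(c = 0 ∧ d = 0)) :
    ∃ α β e f : k, ¬(α = 0 ∧ β = 0) ∧ ¬(e = 0 ∧ f = 0) ∧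
      C α * (X 0 * X 1) +
        C β * ((C a * X 0 + C b * X 1) * (C c * X 0 + C d * X 1)) =
      (C e * X 0 + C f * X 1 : MvPolynomial (Fin 2) k) ^ 2 := by
  obtain ⟨e, he⟩ := IsAlgClosed.exists_pow_nat_eq (a * c) two_pos
  obtain ⟨f, hf⟩ := IsAlgClosed.exists_pow_nat_eq (b * d) two_pos
  refine ⟨2 * e * f - (a * d + b * c), 1, e, f, by simp,
    not_and_eq_zero_of_sq_eq_mul he hf h2 h3 h4 h5, ?_⟩
  have hC {r s t : k} (h : r ^ 2 = s * t) :
      (C r : MvPolynomial (Fin 2) k) ^ 2 = C s * C t := by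
    rw [← map_pow, h, map_mul]
  simp only [map_sub, map_add, map_mul, map_ofNat, map_one, one_mul]
  exact pencil_eq_sq_of_sq_eq_mul (hC he) (hC hf) (X 0) (X 1)

/-- Over an algebraically closed field, the pencil generated by two distinct
degenerate hyperbolas `XY` and `(aX + bY)(cX + dY)` centered at the origin
contains a double line `(eX + fY)²`. -/
theorem stmt9 {k : Type*} [Field k] [IsAlgClosed k] (hch : (2 : k) ≠ 0)
    (a b c d : k)
    (h1 : a * d - b * c ≠ 0)
    (h2 : ¬(a = 0 ∧ d = 0)) (h3 : ¬(b = 0 ∧ c = 0))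
    (h4 : ¬(a = 0 ∧ b = 0)) (h5 : ¬(c = 0 ∧ d = 0)) :
    ∃ α β e f : k, ¬(α = 0 ∧ β = 0) ∧ ¬(e = 0 ∧ f = 0) ∧
      C α * (X 0 * X 1) +
        C β * ((C a * X 0 + C b * X 1) * (C c * X 0 + C d * X 1)) =
      (C e * X 0 + C f * X 1 : MvPolynomial (Fin 2) k) ^ 2 :=
  stmt9_general a b c d h2 h3 h4 h5
end

section
/- Let k be a field of characteristic not 2. Suppose g₁ = XY and g₂ = X(dX + eY + f) with d, e, f ∈ k and e ≠ 0 (so g₁ and g₂ are independent degenerate hyperbolas sharing the linear component X). Then: (1) every reducible quadratic of the form αg₁ + βg₂ + λ (α,β,λ ∈ k, (α,β) ≠ (0,0)) that is a hyperbola has λ = 0 and has X as a linear factor; and (2) the combination −e·g₁ + g₂ = X(dX + f) is a degenerate parabola (product of two linear polynomials in X alone) sharing the component X with g₁. -/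
/-!
Write `h = βd X² + (α + βe) XY + βf X + λ`: it has no `Y²` and no `Y` term. If the `XY`
coefficient vanished, the quadratic part would be `m₁ m₂` with `m = aX + bY`, `b₁b₂ = 0` and
`a₁b₂ + a₂b₁ = 0`; then `(a₁b₂ - a₂b₁)² = (a₁b₂ + a₂b₁)² - 4a₁a₂b₁b₂ = 0`, so `m₁, m₂` would be
proportional and `h` not a hyperbola. In a factorization `h = l₁ l₂` into affine forms
`lᵢ = cᵢ + aᵢX + bᵢY`, the missing `Y²` term makes one factor, say `l₂`, free of `Y`; the
nonzero `XY` term then forces `b₁ ≠ 0`, and the missing `Y` term `b₁c₂` gives `c₂ = 0`.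
Hence `l₂ = a₂X` and `λ = c₁c₂ = 0`.
-/

open MvPolynomial

open Finsupp (single)

section
variable {k : Type*} [Field k]

noncomputable def conic (a b c d e f : k) : MvPolynomial (Fin 2) k :=
  C a * X 0 ^ 2 + C b * (X 0 * X 1) + C c * X 1 ^ 2 + C d * X 0 + C e * X 1 + C f

lemma conic_eq_sum_monomial (a b c d e f : k) :
    conic a b c d e f =
      monomial (single 0 2) a + monomial (single 0 1 + single 1 1) b + monomial (single 1 2) c
        + monomial (single 0 1) d + monomial (single 1 1) e + monomial 0 f := by
  simp only [conic, C_mul_X_pow_eq_monomial, C_mul_X_eq_monomial]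
  rw [X, X, monomial_mul, C_mul_monomial, one_mul, mul_one, C_apply]

@[simp]
lemma coeff_conic_yy (a b c d e f : k) : coeff (single 1 2) (conic a b c d e f) = c := by
  simp [conic_eq_sum_monomial, coeff_monomial, Finsupp.ext_iff, Fin.forall_fin_two]

@[simp]
lemma coeff_conic_xy (a b c d e f : k) :
    coeff (single 0 1 + single 1 1) (conic a b c d e f) = b := by
  simp [conic_eq_sum_monomial, coeff_monomial, Finsupp.ext_iff, Fin.forall_fin_two]

@[simp]
lemma coeff_conic_y (a b c d e f : k) : coeff (single 1 1) (conic a b c d e f) = e := by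
  simp [conic_eq_sum_monomial, coeff_monomial, Finsupp.ext_iff, Fin.forall_fin_two]

@[simp]
lemma coeff_conic_zero (a b c d e f : k) : coeff 0 (conic a b c d e f) = f := by
  simp [conic_eq_sum_monomial, coeff_monomial, Finsupp.ext_iff, Fin.forall_fin_two]

lemma affine_mul_affine (c₁ a₁ b₁ c₂ a₂ b₂ : k) :
    (C c₁ + C a₁ * X 0 + C b₁ * X 1) * (C c₂ + C a₂ * X 0 + C b₂ * X 1) =
      conic (a₁ * a₂) (a₁ * b₂ + a₂ * b₁) (b₁ * b₂) (a₁ * c₂ + a₂ * c₁) (b₁ * c₂ + b₂ * c₁)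
        (c₁ * c₂) := by
  simp only [conic, C_add, C_mul]
  ring

lemma eq_affine_of_totalDegree_le_one {p : MvPolynomial (Fin 2) k} (hp : p.totalDegree ≤ 1) :
    p = C (coeff 0 p) + C (coeff (single 0 1) p) * X 0 + C (coeff (single 1 1) p) * X 1 := by
  ext m
  obtain ⟨i, j, rfl⟩ : ∃ i j, m = single 0 i + single 1 j :=
    ⟨m 0, m 1, by ext x; fin_cases x <;> simp⟩
  rcases (by omega : (i = 0 ∧ j = 0) ∨ (i = 1 ∧ j = 0) ∨ (i = 0 ∧ j = 1) ∨ 1 < i + j) with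
    ⟨rfl, rfl⟩ | ⟨rfl, rfl⟩ | ⟨rfl, rfl⟩ | hij
  · simp
  · simp [coeff_C, coeff_X, Finsupp.ext_iff, Fin.forall_fin_two]
  · simp [coeff_C, coeff_X, Finsupp.ext_iff, Fin.forall_fin_two]
  · rw [coeff_eq_zero_of_totalDegree_lt]
    · simp [coeff_C, coeff_X, Finsupp.ext_iff, Fin.forall_fin_two]
      rw [if_neg (by omega), if_neg (by omega), if_neg (by omega), add_zero, add_zero]
    · rw [← Finsupp.degree_apply, map_add, Finsupp.degree_single, Finsupp.degree_single]
      omega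

lemma exists_eq_linear_of_isHomogeneous_one {p : MvPolynomial (Fin 2) k}
    (hp : p.IsHomogeneous 1) : ∃ a b : k, p = C a * X 0 + C b * X 1 := by
  refine ⟨coeff (single 0 1) p, coeff (single 1 1) p,
    (eq_affine_of_totalDegree_le_one hp.totalDegree_le).trans ?_⟩
  rw [hp.coeff_eq_zero (by simp), C_0, zero_add]

lemma linear_mul_linear (a₁ b₁ a₂ b₂ : k) :
    (C a₁ * X 0 + C b₁ * X 1) * (C a₂ * X 0 + C b₂ * X 1) =
      conic (a₁ * a₂) (a₁ * b₂ + a₂ * b₁) (b₁ * b₂) 0 0 0 := by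
  simp only [conic, C_add, C_mul, C_0]
  ring

lemma exists_proportional_of_mul_eq_mul {σ : Type*} (i j : σ) {a₁ b₁ a₂ b₂ : k}
    (h : a₁ * b₂ = a₂ * b₁) :
    ∃ c : k, C a₂ * X i + C b₂ * X j = C c * (C a₁ * X i + C b₁ * X j) ∨
      C a₁ * X i + C b₁ * X j = C c * (C a₂ * X i + C b₂ * X j) := by
  by_cases ha₁ : a₁ = 0
  · by_cases hb₁ : b₁ = 0
    · exact ⟨0, Or.inr (by simp [ha₁, hb₁])⟩
    have ha₂ : a₂ = 0 := by simpa [ha₁, hb₁] using h.symm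
    refine ⟨b₂ / b₁, Or.inl ?_⟩
    simp only [ha₁, ha₂, C_0, zero_mul, zero_add, ← mul_assoc, ← C_mul, div_mul_cancel₀ _ hb₁]
  · have hb₂ : b₂ = a₂ / a₁ * b₁ := by field_simp; linear_combination h
    refine ⟨a₂ / a₁, Or.inl ?_⟩
    simp only [hb₂, mul_add, ← mul_assoc, ← C_mul, div_mul_cancel₀ _ ha₁]

lemma IsHyperbola.coeff_xy_ne_zero {g : MvPolynomial (Fin 2) k} (hg : IsHyperbola g)
    (hyy : coeff (single 1 2) g = 0) : coeff (single 0 1 + single 1 1) g ≠ 0 := by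
  obtain ⟨m₁, m₂, hm₁, hm₂, hprod, hnp⟩ := hg
  obtain ⟨a₁, b₁, rfl⟩ := exists_eq_linear_of_isHomogeneous_one hm₁
  obtain ⟨a₂, b₂, rfl⟩ := exists_eq_linear_of_isHomogeneous_one hm₂
  rw [linear_mul_linear] at hprod
  have hyy' : b₁ * b₂ = 0 := by
    have hcoeff := congrArg (coeff (single 1 2)) hprod
    rwa [coeff_homogeneousComponent, if_pos (by simp), hyy, coeff_conic_yy, eq_comm] at hcoeff
  intro hxy
  have hxy' : a₁ * b₂ + a₂ * b₁ = 0 := by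
    have hcoeff := congrArg (coeff (single 0 1 + single 1 1)) hprod
    rwa [coeff_homogeneousComponent, if_pos (by simp [map_add]), hxy, coeff_conic_xy,
      eq_comm] at hcoeff
  have hdet : a₁ * b₂ = a₂ * b₁ := by
    refine sub_eq_zero.1 ((pow_eq_zero_iff two_ne_zero).1 ?_)
    linear_combination (a₁ * b₂ + a₂ * b₁) * hxy' - 4 * a₁ * a₂ * hyy'
  exact hnp (exists_proportional_of_mul_eq_mul 0 1 hdet)

lemma mul_eq_zero_and_X_dvd_affine_mul_affine {c₁ a₁ b₁ c₂ a₂ b₂ : k} (hyy : b₁ * b₂ = 0)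
    (hxy : a₁ * b₂ + a₂ * b₁ ≠ 0) (hy : b₁ * c₂ + b₂ * c₁ = 0) :
    c₁ * c₂ = 0 ∧ (X 0 : MvPolynomial (Fin 2) k) ∣
      (C c₁ + C a₁ * X 0 + C b₁ * X 1) * (C c₂ + C a₂ * X 0 + C b₂ * X 1) := by
  wlog hb₂ : b₂ = 0 generalizing c₁ a₁ b₁ c₂ a₂ b₂
  · have hb₁ : b₁ = 0 := (mul_eq_zero.1 hyy).resolve_right hb₂
    rw [mul_comm c₁, mul_comm (C c₁ + C a₁ * X 0 + C b₁ * X 1)]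
    exact this (by rwa [mul_comm]) (by rwa [add_comm]) (by rwa [add_comm]) hb₁
  have hb₁ : b₁ ≠ 0 := by rintro rfl; simp [hb₂] at hxy
  have hc₂ : c₂ = 0 := by simpa [hb₂, hb₁] using hy
  subst hb₂ hc₂
  refine ⟨mul_zero c₁, Dvd.dvd.mul_left ?_ _⟩
  simp

lemma coeff_zero_eq_zero_and_X_dvd_of_eq_mul {g l₁ l₂ : MvPolynomial (Fin 2) k}
    (hl₁ : l₁.totalDegree ≤ 1) (hl₂ : l₂.totalDegree ≤ 1) (hg : g = l₁ * l₂)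
    (hyy : coeff (single 1 2) g = 0) (hxy : coeff (single 0 1 + single 1 1) g ≠ 0)
    (hy : coeff (single 1 1) g = 0) :
    coeff 0 g = 0 ∧ X 0 ∣ g := by
  rw [hg, eq_affine_of_totalDegree_le_one hl₁, eq_affine_of_totalDegree_le_one hl₂] at hyy hxy hy ⊢
  rw [affine_mul_affine, coeff_conic_yy] at hyy
  rw [affine_mul_affine, coeff_conic_xy] at hxy
  rw [affine_mul_affine, coeff_conic_y] at hy
  obtain ⟨hc, hdvd⟩ := mul_eq_zero_and_X_dvd_affine_mul_affine hyy hxy hy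
  exact ⟨by rwa [affine_mul_affine, coeff_conic_zero], hdvd⟩
end

theorem stmt10_general {k : Type*} [Field k]
    (d e f : k) :
    (∀ α β lam : k, ¬(α = 0 ∧ β = 0) →
      ∀ h : MvPolynomial (Fin 2) k,
        h = C α * (X 0 * X 1) + C β * (X 0 * (C d * X 0 + C e * X 1 + C f)) + C lam →
        (∃ l₁ l₂ : MvPolynomial (Fin 2) k,
            l₁.totalDegree = 1 ∧ l₂.totalDegree = 1 ∧ h = l₁ * l₂) →
        IsHyperbola h → lam = 0 ∧ X 0 ∣ h) ∧
    C (-e) * (X 0 * X 1) + X 0 * (C d * X 0 + C e * X 1 + C f) =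
      (X 0 : MvPolynomial (Fin 2) k) * (C d * X 0 + C f) := by
  refine ⟨?_, by rw [C_neg]; ring⟩
  rintro α β lam - h rfl ⟨l₁, l₂, hl₁, hl₂, hfac⟩ hyp
  have hconic : C α * (X 0 * X 1) + C β * (X 0 * (C d * X 0 + C e * X 1 + C f)) + C lam =
      conic (β * d) (α + β * e) 0 (β * f) 0 lam := by
    simp only [conic, C_add, C_mul, C_0]
    ring
  rw [hconic] at hfac hyp ⊢
  have hxy := hyp.coeff_xy_ne_zero (coeff_conic_yy _ _ _ _ _ _)
  obtain ⟨hlam, hdvd⟩ := coeff_zero_eq_zero_and_X_dvd_of_eq_mul hl₁.le hl₂.le hfac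
    (coeff_conic_yy _ _ _ _ _ _) hxy (coeff_conic_y _ _ _ _ _ _)
  exact ⟨by rwa [coeff_conic_zero] at hlam, hdvd⟩

/-- For `g₁ = XY` and `g₂ = X(dX + eY + f)` with `e ≠ 0`: (1) every reducible
member `αg₁ + βg₂ + λ` of the affine pencil that is a hyperbola has `λ = 0` and
is divisible by `X`; (2) `-e·g₁ + g₂ = X(dX + f)` is a degenerate parabola
sharing the component `X` with `g₁`. -/
theorem stmt10 {k : Type*} [Field k] (hch : (2 : k) ≠ 0)
    (d e f : k) (he : e ≠ 0) :
    (∀ α β lam : k, ¬(α = 0 ∧ β = 0) →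
      ∀ h : MvPolynomial (Fin 2) k,
        h = C α * (X 0 * X 1) + C β * (X 0 * (C d * X 0 + C e * X 1 + C f)) + C lam →
        (∃ l₁ l₂ : MvPolynomial (Fin 2) k,
            l₁.totalDegree = 1 ∧ l₂.totalDegree = 1 ∧ h = l₁ * l₂) →
        IsHyperbola h → lam = 0 ∧ X 0 ∣ h) ∧
    C (-e) * (X 0 * X 1) + X 0 * (C d * X 0 + C e * X 1 + C f) =
      (X 0 : MvPolynomial (Fin 2) k) * (C d * X 0 + C f) :=
  stmt10_general d e f
end

section
/- Let k be a field of characteristic not 2, and let f = Y·m ∈ k[X,Y] be a reducible quadratic with linear factor Y and m a linear polynomial of degree 1 not proportional to Y. If g is any quadratic with f − g ∈ k and g reducible over k, and the two linear factors of f define non-parallel lines, then g = f. (Uniqueness of the degeneration of a degenerate hyperbola.) -/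
/-!
Write `m = aX + bY + e`; the lines are non-parallel exactly when `a ≠ 0`. If `f - g = c ≠ 0`,
then `g = (aY)·X + (Y(bY + e) - c)` is linear in `X` with coefficients coprime in `k[Y]`, since any
common factor divides `c`; so `g` is irreducible and cannot be a product of two linear factors.
Hence `c = 0`.
-/

open MvPolynomial

namespace MvPolynomial

variable {σ R : Type*}

lemma exists_eq_C_mul_X_add_C_mul_X_add_C [CommRing R] {p : MvPolynomial (Fin 2) R}
    (hp : p.totalDegree ≤ 1) : ∃ a b e, p = C a * X 0 + C b * X 1 + C e := by
  refine ⟨coeff (Finsupp.single 0 1) p, coeff (Finsupp.single 1 1) p, coeff 0 p, ?_⟩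
  ext d
  obtain ⟨u, v, rfl⟩ : ∃ u v, d = Finsupp.single 0 u + Finsupp.single 1 v :=
    ⟨d 0, d 1, by ext i; fin_cases i <;> simp⟩
  simp only [coeff_add, coeff_C_mul, coeff_X, coeff_C]
  by_cases huv : u + v ≤ 1
  · obtain ⟨rfl, rfl⟩ | ⟨rfl, rfl⟩ | ⟨rfl, rfl⟩ :
        (u = 0 ∧ v = 0) ∨ (u = 1 ∧ v = 0) ∨ (u = 0 ∧ v = 1) := by omega
    all_goals simp [Finsupp.single_eq_single_iff, eq_comm (a := (0 : Fin 2 →₀ ℕ))]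
  · rw [coeff_eq_zero_of_totalDegree_lt (by
      rw [← Finsupp.degree_apply, map_add, Finsupp.degree_single, Finsupp.degree_single]; omega)]
    simp only [Finsupp.ext_iff, Fin.forall_fin_two, Finsupp.coe_add, Pi.add_apply,
      Finsupp.single_eq_same, Finsupp.single_eq_of_ne, ne_eq, zero_ne_one, one_ne_zero,
      not_false_eq_true, add_zero, zero_add, Finsupp.coe_zero, Pi.zero_apply, mul_ite, mul_one,
      mul_zero]
    rw [if_neg (by omega), if_neg (by omega), if_neg (by omega)]
    simp

lemma homogeneousComponent_one_C_mul_X_add_C_mul_X_add_C [CommRing R] (a b e : R) :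
    homogeneousComponent 1 (C a * X 0 + C b * X 1 + C e : MvPolynomial (Fin 2) R) =
      C a * X 0 + C b * X 1 := by
  have hlin : (C a * X 0 + C b * X 1 : MvPolynomial (Fin 2) R).IsHomogeneous 1 :=
    ((isHomogeneous_X R 0).C_mul a).add ((isHomogeneous_X R 1).C_mul b)
  rw [map_add, homogeneousComponent_eq_self hlin, homogeneousComponent_eq_zero _ _ (by simp),
    add_zero]

lemma irreducible_X_mul_add_sub_C {k : Type*} [Field k] {i j : σ} (hij : i ≠ j) {a c : k}
    (ha : a ≠ 0) (hc : c ≠ 0) {r : MvPolynomial σ k} (hr : i ∉ r.vars) :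
    Irreducible (X j * (C a * X i + r) - C c) := by
  classical
  rw [show X j * (C a * X i + r) - C c = C a * X j * X i + (X j * r - C c) by ring]
  refine irreducible_mul_X_add _ _ i (by simp [ha]) ?_ ?_ ?_
  · simp [vars_C_mul a ha, vars_X, hij]
  · intro hi
    have hi' : i ∈ (X j * r).vars := by simpa using vars_sub_subset _ hi
    simpa [vars_X, hij, hr] using vars_mul _ _ hi'
  · intro d hd hd'
    have hCa : C a * C a⁻¹ = (1 : MvPolynomial σ k) := by
      rw [← C_mul, mul_inv_cancel₀ ha, C_1]
    have hdc : d ∣ C c := by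
      have hcomb : C c = C a * X j * (C a⁻¹ * r) - (X j * r - C c) := by
        linear_combination -(X j * r) * hCa
      exact hcomb ▸ (hd.mul_right _).sub hd'
    exact isUnit_of_dvd_unit hdc (hc.isUnit.map C)

lemma not_irreducible_mul_of_totalDegree_eq_one [CommRing R] [IsReduced R]
    {l₁ l₂ : MvPolynomial σ R} (h₁ : l₁.totalDegree = 1) (h₂ : l₂.totalDegree = 1) :
    ¬ Irreducible (l₁ * l₂) := fun h ↦ by
  rcases h.isUnit_or_isUnit rfl with hu | hu <;>
    simp_all [isUnit_iff_totalDegree_of_isReduced]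

end MvPolynomial

theorem stmt18_general {k : Type*} [Field k]
    (m g : MvPolynomial (Fin 2) k)
    (hm : m.totalDegree = 1)
    (hnp : ¬ ∃ c : k, homogeneousComponent 1 m = C c * X 1)
    (hg : ∃ l₁ l₂ : MvPolynomial (Fin 2) k,
      l₁.totalDegree = 1 ∧ l₂.totalDegree = 1 ∧ g = l₁ * l₂)
    (hdiff : ∃ c : k, X 1 * m - g = C c) :
    g = X 1 * m := by
  obtain ⟨l₁, l₂, h₁, h₂, rfl⟩ := hg
  obtain ⟨c, hc⟩ := hdiff
  obtain ⟨a, b, e, rfl⟩ := exists_eq_C_mul_X_add_C_mul_X_add_C hm.le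
  have ha : a ≠ 0 := by
    rintro rfl
    exact hnp ⟨b, by rw [homogeneousComponent_one_C_mul_X_add_C_mul_X_add_C]; simp⟩
  obtain rfl : c = 0 := by
    by_contra hc0
    have hprod : l₁ * l₂ = X 1 * (C a * X 0 + (C b * X 1 + C e)) - C c := by
      linear_combination -hc
    have hvars : (0 : Fin 2) ∉ (C b * X 1 + C e : MvPolynomial (Fin 2) k).vars := fun h ↦ by
      classical
      simpa [vars_X] using
        vars_mul _ _ ((Finset.mem_union.1 (vars_add_subset _ _ h)).resolve_right (by simp))
    exact not_irreducible_mul_of_totalDegree_eq_one h₁ h₂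
      (hprod ▸ irreducible_X_mul_add_sub_C zero_ne_one ha hc0 hvars)
  rw [map_zero, sub_eq_zero] at hc
  exact hc.symm

/-- Uniqueness of the degeneration of a degenerate hyperbola: if `f = Y·m` with
`m` linear and the lines `Y = 0`, `m = 0` non-parallel, and `g` is a reducible
quadratic with `f − g` constant, then `g = f`. -/
theorem stmt18 {k : Type*} [Field k] (hch : (2 : k) ≠ 0)
    (m g : MvPolynomial (Fin 2) k)
    (hm : m.totalDegree = 1)
    (hnp : ¬ ∃ c : k, homogeneousComponent 1 m = C c * X 1)
    (hg : ∃ l₁ l₂ : MvPolynomial (Fin 2) k,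
      l₁.totalDegree = 1 ∧ l₂.totalDegree = 1 ∧ g = l₁ * l₂)
    (hdiff : ∃ c : k, X 1 * m - g = C c) :
    g = X 1 * m :=
  stmt18_general m g hm hnp hg hdiff
end
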